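/- arXiv:2303.09401 — 2 statements merged into one kernel-verified Lean document; each statement's English description precedes it below -/
import Mathlib

section
/- Let p(x) = Σ_{n∈I₁} αₙ N(x; μₙ, Pₙ) and q(x) = Σ_{m∈I₂} βₘ N(x; mₘ, Sₘ) be two finite Gaussian mixtures on ℝ^d with real weights αₙ, βₘ, mean vectors μₙ, mₘ ∈ ℝ^d, and symmetric positive-definite covariance matrices Pₙ, Sₘ. Then the integrated squared difference satisfies ISD(p‖q) = Σ_{n,n'∈I₁} αₙ α_{n'} N(μₙ; μ_{n'}, Pₙ + P_{n'}) + Σ_{m,m'∈I₂} βₘ β_{m'} N(mₘ; m_{m'}, Sₘ + S_{m'}) − 2 Σ_{n∈I₁, m∈I₂} αₙ βₘ N(μₙ; mₘ, Pₙ + Sₘ). -/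
/-!
Expanding the square turns the integrated squared difference into a bilinear combination of
integrals `∫ N(x; μ₁, P) N(x; μ₂, S) dx`. Completing the square in `x` writes such a product as
the constant `N(μ₁; μ₂, P + S)` times a Gaussian density in `x` with covariance
`(P⁻¹ + S⁻¹)⁻¹`, and every Gaussian density integrates to one: the substitution
`x = S^{1/2} y + μ` reduces it to the standard Gaussian integral, a product of one-dimensional ones.
-/

open MeasureTheory Real Matrix Finset

/-- The multivariate Gaussian density
`N(x; μ, Σ) = ((2π)^d det Σ)^{-1/2} exp(-(1/2)(x-μ)ᵀ Σ⁻¹ (x-μ))` on `ℝ^d`. -/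
noncomputable def gaussPDF (d : ℕ) (μ : Fin d → ℝ) (S : Matrix (Fin d) (Fin d) ℝ)
    (x : Fin d → ℝ) : ℝ :=
  (Real.sqrt ((2 * Real.pi) ^ d * S.det))⁻¹ *
    Real.exp (-(1 / 2) * ((x - μ) ⬝ᵥ (S⁻¹ *ᵥ (x - μ))))

open scoped MatrixOrder

section LinearAlgebra

variable {n R : Type*} [Fintype n] [CommRing R]

theorem Matrix.IsHermitian.mulVec_dotProduct [StarRing R] [TrivialStar R] {M : Matrix n n R}
    (hM : M.IsHermitian) (v w : n → R) : (M *ᵥ v) ⬝ᵥ w = v ⬝ᵥ (M *ᵥ w) := by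
  rw [dotProduct_mulVec, ← vecMul_transpose, ← conjTranspose_eq_transpose_of_trivial, hM.eq,
    dotProduct_comm]

variable [DecidableEq n]

theorem Matrix.IsHermitian.add_mulVec_dotProduct_inv_mulVec [StarRing R] [TrivialStar R]
    {M : Matrix n n R} (hM : M.IsHermitian) (hM' : IsUnit M.det) (w z : n → R) :
    (w + M *ᵥ z) ⬝ᵥ (M⁻¹ *ᵥ (w + M *ᵥ z)) = w ⬝ᵥ (M⁻¹ *ᵥ w) + 2 * (w ⬝ᵥ z) + z ⬝ᵥ (M *ᵥ z) := by
  have hcancel : ∀ v, M *ᵥ (M⁻¹ *ᵥ v) = v := fun v ↦ by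
    rw [mulVec_mulVec, mul_nonsing_inv _ hM', one_mulVec]
  rw [mulVec_add, mulVec_mulVec, nonsing_inv_mul _ hM', one_mulVec, add_dotProduct,
    dotProduct_add, dotProduct_add, hM.mulVec_dotProduct, hM.mulVec_dotProduct, hcancel,
    dotProduct_comm z w]
  ring

theorem Matrix.det_mul_det_inv_add_inv_mul_det {P S : Matrix n n R} (hP : IsUnit P.det)
    (hS : IsUnit S.det) : P.det * (P⁻¹ + S⁻¹).det * S.det = (P + S).det := by
  rw [← det_mul, ← det_mul, Matrix.mul_add, Matrix.add_mul, mul_nonsing_inv _ hP, Matrix.one_mul,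
    Matrix.mul_assoc, nonsing_inv_mul _ hS, Matrix.mul_one, add_comm]

theorem Matrix.PosDef.exists_isHermitian_mul_self_eq {S : Matrix n n ℝ} (hS : S.PosDef) :
    ∃ B : Matrix n n ℝ, B.IsHermitian ∧ B * B = S ∧ B.det = √S.det :=
  ⟨CFC.sqrt S, (CFC.sqrt_nonneg S).posSemidef.isHermitian,
    CFC.sqrt_mul_sqrt_self S hS.posSemidef.nonneg, by
      rw [hS.posSemidef.det_sqrt, RCLike.sqrt_of_nonneg hS.posSemidef.det_nonneg]; rfl⟩

end LinearAlgebra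

section Integration

variable {α ι κ A : Type*} [MeasurableSpace α] {ν : Measure α} [Fintype ι] [Fintype κ]
  [NormedRing A] {f : ι → α → A} {g : κ → α → A}

theorem integrable_sum_mul_sum (h : ∀ i j, Integrable (fun x ↦ f i x * g j x) ν) :
    Integrable (fun x ↦ (∑ i, f i x) * ∑ j, g j x) ν := by
  simp_rw [Finset.sum_mul_sum]
  exact integrable_finsetSum _ fun i _ ↦ integrable_finsetSum _ fun j _ ↦ h i j

theorem integral_sum_mul_sum [NormedSpace ℝ A] (h : ∀ i j, Integrable (fun x ↦ f i x * g j x) ν) :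
    ∫ x, (∑ i, f i x) * (∑ j, g j x) ∂ν = ∑ i, ∑ j, ∫ x, f i x * g j x ∂ν := by
  simp_rw [Finset.sum_mul_sum]
  rw [integral_finsetSum _ fun i _ ↦ integrable_finsetSum _ fun j _ ↦ h i j]
  exact Finset.sum_congr rfl fun i _ ↦ integral_finsetSum _ fun j _ ↦ h i j

variable {d : ℕ}

theorem integral_exp_neg_half_dotProduct_self :
    ∫ y : Fin d → ℝ, exp (-(1 / 2) * (y ⬝ᵥ y)) = √((2 * π) ^ d) := by
  have hprod : ∀ y : Fin d → ℝ, exp (-(1 / 2) * (y ⬝ᵥ y)) = ∏ i, exp (-(1 / 2) * y i ^ 2) := by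
    intro y
    simp only [dotProduct, ← exp_sum, Finset.mul_sum, sq]
  simp_rw [hprod]
  rw [volume_pi, integral_fintype_prod_eq_pow (fun t : ℝ ↦ exp (-(1 / 2) * t ^ 2)),
    integral_gaussian, Fintype.card_fin, div_div_eq_mul_div, div_one, mul_comm π,
    ← sqrt_sq (by positivity : 0 ≤ √(2 * π) ^ d), ← pow_mul, mul_comm d, pow_mul,
    sq_sqrt (by positivity)]

theorem integral_comp_mulVec_add {E : Type*} [NormedAddCommGroup E] [NormedSpace ℝ E]
    {M : Matrix (Fin d) (Fin d) ℝ} (hM : IsUnit M) (c : Fin d → ℝ) (f : (Fin d → ℝ) → E) :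
    ∫ y, f (M *ᵥ y + c) = |M.det|⁻¹ • ∫ x, f x := by
  have hdet : LinearMap.det (toLin' M) ≠ 0 := by
    rw [LinearMap.det_toLin']; exact ((isUnit_iff_isUnit_det M).mp hM).ne_zero
  have hemb : MeasurableEmbedding (toLin' M) := by
    let := hM.invertible
    exact (M.toLinearEquiv' this).toContinuousLinearEquiv.toHomeomorph.measurableEmbedding
  calc ∫ y, f (M *ᵥ y + c) = ∫ x, f (x + c) ∂(Measure.map (toLin' M) volume) :=
        (hemb.integral_map fun x ↦ f (x + c)).symm
    _ = |M.det|⁻¹ • ∫ x, f (x + c) := by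
        rw [Real.map_linearMap_volume_pi_eq_smul_volume_pi hdet, integral_smul_measure,
          LinearMap.det_toLin', ENNReal.toReal_ofReal (by positivity), abs_inv]
    _ = |M.det|⁻¹ • ∫ x, f x := by rw [integral_add_right_eq_self]

end Integration

section Gaussian

variable {d : ℕ} {P S : Matrix (Fin d) (Fin d) ℝ}

theorem integral_gaussPDF (hS : S.PosDef) (μ : Fin d → ℝ) : ∫ x, gaussPDF d μ S x = 1 := by
  obtain ⟨B, hBsymm, rfl, hBdet⟩ := hS.exists_isHermitian_mul_self_eq
  have hB : IsUnit B.det := by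
    rw [isUnit_iff_ne_zero, hBdet, sqrt_ne_zero']; exact hS.det_pos
  have hwhite : ∀ y, (B *ᵥ y) ⬝ᵥ ((B * B)⁻¹ *ᵥ (B *ᵥ y)) = y ⬝ᵥ y := by
    intro y
    rw [hBsymm.mulVec_dotProduct, mulVec_mulVec, mulVec_mulVec, Matrix.mul_inv_rev,
      Matrix.mul_nonsing_inv_cancel_left _ _ hB, Matrix.nonsing_inv_mul _ hB, one_mulVec]
  have hcomp : ∫ y, gaussPDF d μ (B * B) (B *ᵥ y + μ)
      = (√((2 * π) ^ d * (B * B).det))⁻¹ * √((2 * π) ^ d) := by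
    simp only [gaussPDF, add_sub_cancel_right, hwhite, integral_const_mul,
      integral_exp_neg_half_dotProduct_self]
  have hsubst := integral_comp_mulVec_add ((isUnit_iff_isUnit_det B).mpr hB) μ
    (gaussPDF d μ (B * B))
  have hpos : 0 < √((2 * π) ^ d) := by positivity
  have hdet : 0 < √(B * B).det := sqrt_pos.mpr hS.det_pos
  rw [hcomp, hBdet, abs_of_pos hdet, smul_eq_mul, sqrt_mul (by positivity), mul_inv] at hsubst
  field_simp at hsubst
  linarith

theorem gaussPDF_mul_gaussPDF (hP : P.PosDef) (hS : S.PosDef) (μ₁ μ₂ x : Fin d → ℝ) :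
    gaussPDF d μ₁ P x * gaussPDF d μ₂ S x =
      gaussPDF d μ₂ (P + S) μ₁ *
        gaussPDF d (μ₁ - P *ᵥ ((P + S)⁻¹ *ᵥ (μ₁ - μ₂))) (P⁻¹ + S⁻¹)⁻¹ x := by
  have hPdet : IsUnit P.det := isUnit_iff_ne_zero.mpr hP.det_pos.ne'
  have hSdet : IsUnit S.det := isUnit_iff_ne_zero.mpr hS.det_pos.ne'
  have hPSdet : IsUnit (P + S).det := isUnit_iff_ne_zero.mpr (hP.add hS).det_pos.ne'
  have hAdet : IsUnit (P⁻¹ + S⁻¹).det := isUnit_iff_ne_zero.mpr (hP.inv.add hS.inv).det_pos.ne'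
  -- Writing `x - μ₁ = w - P z` and `x - μ₂ = w + S z`, the cross terms `± 2 w ⬝ z` of the two
  -- exponents cancel, leaving `w ⬝ (P⁻¹ + S⁻¹) w + z ⬝ (P + S) z`.
  set z := (P + S)⁻¹ *ᵥ (μ₁ - μ₂)
  set w := x - (μ₁ - P *ᵥ z)
  have hPSz : P *ᵥ z + S *ᵥ z = μ₁ - μ₂ := by
    rw [← add_mulVec, mulVec_mulVec, mul_nonsing_inv _ hPSdet, one_mulVec]
  have hu : x - μ₁ = w + P *ᵥ (-z) := by
    simp only [w, mulVec_neg]; abel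
  have hv : x - μ₂ = w + S *ᵥ z := by
    simp only [w]; linear_combination -hPSz
  have hz : z ⬝ᵥ ((P + S) *ᵥ z) = (μ₁ - μ₂) ⬝ᵥ ((P + S)⁻¹ *ᵥ (μ₁ - μ₂)) := by
    rw [add_mulVec, hPSz, dotProduct_comm]
  have hexp : (x - μ₁) ⬝ᵥ (P⁻¹ *ᵥ (x - μ₁)) + (x - μ₂) ⬝ᵥ (S⁻¹ *ᵥ (x - μ₂)) =
      (μ₁ - μ₂) ⬝ᵥ ((P + S)⁻¹ *ᵥ (μ₁ - μ₂)) + w ⬝ᵥ ((P⁻¹ + S⁻¹)⁻¹⁻¹ *ᵥ w) := by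
    rw [hu, hv, hP.isHermitian.add_mulVec_dotProduct_inv_mulVec hPdet,
      hS.isHermitian.add_mulVec_dotProduct_inv_mulVec hSdet, nonsing_inv_nonsing_inv _ hAdet,
      ← hz, add_mulVec, add_mulVec, dotProduct_add, dotProduct_add, mulVec_neg, dotProduct_neg,
      neg_dotProduct, dotProduct_neg]
    ring
  have hnorm : (√((2 * π) ^ d * P.det))⁻¹ * (√((2 * π) ^ d * S.det))⁻¹ =
      (√((2 * π) ^ d * (P + S).det))⁻¹ * (√((2 * π) ^ d * (P⁻¹ + S⁻¹)⁻¹.det))⁻¹ := by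
    have h2π : 0 < (2 * π) ^ d := by positivity
    rw [← mul_inv, ← mul_inv, ← sqrt_mul (mul_pos h2π hP.det_pos).le,
      ← sqrt_mul (mul_pos h2π (hP.add hS).det_pos).le, det_nonsing_inv, Ring.inverse_eq_inv',
      ← det_mul_det_inv_add_inv_mul_det hPdet hSdet]
    field_simp [hAdet.ne_zero]
  unfold gaussPDF
  rw [mul_mul_mul_comm, ← exp_add, hnorm, mul_mul_mul_comm, ← exp_add]
  congr 2
  linear_combination (-1 / 2 : ℝ) * hexp

theorem integrable_gaussPDF_mul_gaussPDF (hP : P.PosDef) (hS : S.PosDef) (μ₁ μ₂ : Fin d → ℝ) :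
    Integrable fun x ↦ gaussPDF d μ₁ P x * gaussPDF d μ₂ S x := by
  simp_rw [gaussPDF_mul_gaussPDF hP hS]
  exact (integrable_of_integral_eq_one (integral_gaussPDF (hP.inv.add hS.inv).inv _)).const_mul _

theorem integral_gaussPDF_mul_gaussPDF (hP : P.PosDef) (hS : S.PosDef) (μ₁ μ₂ : Fin d → ℝ) :
    ∫ x, gaussPDF d μ₁ P x * gaussPDF d μ₂ S x = gaussPDF d μ₂ (P + S) μ₁ := by
  simp_rw [gaussPDF_mul_gaussPDF hP hS]
  rw [integral_const_mul, integral_gaussPDF (hP.inv.add hS.inv).inv, mul_one]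

theorem integrable_mul_gaussPDF_mul_mul_gaussPDF (hP : P.PosDef) (hS : S.PosDef) (a b : ℝ)
    (μ₁ μ₂ : Fin d → ℝ) :
    Integrable fun x ↦ a * gaussPDF d μ₁ P x * (b * gaussPDF d μ₂ S x) := by
  simpa only [mul_mul_mul_comm] using
    (integrable_gaussPDF_mul_gaussPDF hP hS μ₁ μ₂).const_mul (a * b)

end Gaussian

section Mixture

variable {d : ℕ} {ι κ : Type*} [Fintype ι] [Fintype κ] (a : ι → ℝ) (b : κ → ℝ)
  (μ : ι → Fin d → ℝ) (ν : κ → Fin d → ℝ) {P : ι → Matrix (Fin d) (Fin d) ℝ}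
  {S : κ → Matrix (Fin d) (Fin d) ℝ}

theorem integrable_gaussMixture_mul_gaussMixture (hP : ∀ i, (P i).PosDef)
    (hS : ∀ j, (S j).PosDef) :
    Integrable fun x ↦
      (∑ i, a i * gaussPDF d (μ i) (P i) x) * ∑ j, b j * gaussPDF d (ν j) (S j) x :=
  integrable_sum_mul_sum fun i j ↦ integrable_mul_gaussPDF_mul_mul_gaussPDF (hP i) (hS j) _ _ _ _

theorem integral_gaussMixture_mul_gaussMixture (hP : ∀ i, (P i).PosDef)
    (hS : ∀ j, (S j).PosDef) :
    ∫ x, (∑ i, a i * gaussPDF d (μ i) (P i) x) * (∑ j, b j * gaussPDF d (ν j) (S j) x) =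
      ∑ i, ∑ j, a i * b j * gaussPDF d (ν j) (P i + S j) (μ i) := by
  rw [integral_sum_mul_sum fun i j ↦
    integrable_mul_gaussPDF_mul_mul_gaussPDF (hP i) (hS j) _ _ _ _]
  simp_rw [mul_mul_mul_comm, integral_const_mul, integral_gaussPDF_mul_gaussPDF (hP _) (hS _)]

end Mixture

/-- The integrated squared difference between two finite Gaussian mixtures
`p = Σₙ αₙ N(·; μₙ, Pₙ)` and `q = Σₘ βₘ N(·; mₘ, Sₘ)` is
`ISD(p‖q) = Σ_{n,n'} αₙα_{n'} N(μₙ; μ_{n'}, Pₙ+P_{n'})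
 + Σ_{m,m'} βₘβ_{m'} N(mₘ; m_{m'}, Sₘ+S_{m'})
 - 2 Σ_{n,m} αₙβₘ N(μₙ; mₘ, Pₙ+Sₘ)`. -/
theorem isd_gaussian_mixtures (d : ℕ) (I₁ I₂ : Type*) [Fintype I₁] [Fintype I₂]
    (α : I₁ → ℝ) (β : I₂ → ℝ)
    (μ : I₁ → Fin d → ℝ) (m : I₂ → Fin d → ℝ)
    (P : I₁ → Matrix (Fin d) (Fin d) ℝ) (S : I₂ → Matrix (Fin d) (Fin d) ℝ)
    (hP : ∀ n, (P n).PosDef) (hS : ∀ m', (S m').PosDef) :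
    ∫ x : Fin d → ℝ,
        ((∑ n, α n * gaussPDF d (μ n) (P n) x)
          - ∑ m', β m' * gaussPDF d (m m') (S m') x) ^ 2
      = (∑ n, ∑ n', α n * α n' * gaussPDF d (μ n') (P n + P n') (μ n))
        + (∑ m', ∑ m'', β m' * β m'' * gaussPDF d (m m'') (S m' + S m'') (m m'))
        - 2 * ∑ n, ∑ m', α n * β m' * gaussPDF d (m m') (P n + S m') (μ n) := by
  have hPP := integrable_gaussMixture_mul_gaussMixture α α μ μ hP hP
  have hSS := integrable_gaussMixture_mul_gaussMixture β β m m hS hS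
  have hPS := integrable_gaussMixture_mul_gaussMixture α β μ m hP hS
  simp_rw [sub_sq', mul_assoc (2 : ℝ), sq]
  rw [integral_sub (hPP.fun_add hSS) (hPS.const_mul 2), integral_add hPP hSS, integral_const_mul,
    integral_gaussMixture_mul_gaussMixture _ _ _ _ hP hP,
    integral_gaussMixture_mul_gaussMixture _ _ _ _ hS hS,
    integral_gaussMixture_mul_gaussMixture _ _ _ _ hP hS]
end

section
/- (AA fusion is the best fit of the mixture in the KL sense) Let D₁, …, D_I be nonnegative integrable functions on ℝ^d, let w₁, …, w_I > 0 with Σᵢ wᵢ = 1, and set D_AA = Σᵢ wᵢ Dᵢ. Let g be a nonnegative measurable function with g > 0 a.e. on {D_AA > 0} and with ∫_{ℝ^d} g(x) dx = ∫_{ℝ^d} D_AA(x) dx < ∞. Assuming the relevant integrals exist, Σᵢ wᵢ D_KL(Dᵢ‖g) ≥ Σᵢ wᵢ D_KL(Dᵢ‖D_AA); that is, among all nonnegative functions of the same total mass as D_AA, the arithmetic average D_AA minimizes the weighted sum of extended KL divergences from the local densities. -/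
/-!
Pointwise, with `S = Σⱼ wⱼ Dⱼ`, the difference of the two weighted sums of integrands collapses to
`Σᵢ wᵢ Dᵢ log (S / g) = S log (S / g)`, which dominates `S - g` by `log t ≤ t - 1`. Integrating,
the difference of the two sides of the inequality is at least `∫ S - ∫ g = 0`.
-/

open MeasureTheory Finset Real

theorem Real.sub_le_mul_log_div {a b : ℝ} (ha : 0 ≤ a) (hb : 0 ≤ b) (hab : 0 < a → 0 < b) :
    a - b ≤ a * log (a / b) := by
  rcases ha.eq_or_lt with rfl | ha
  · simpa using hb
  replace hb := hab ha
  have hlog : 1 - b / a ≤ log (a / b) := by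
    simpa only [inv_div] using one_sub_inv_le_log_of_pos (div_pos ha hb)
  calc a - b = a * (1 - b / a) := by field_simp
    _ ≤ a * log (a / b) := mul_le_mul_of_nonneg_left hlog ha.le

theorem Real.mul_log_div_sub_mul_log_div (p : ℝ) {q r : ℝ} (hq : q ≠ 0) (hr : r ≠ 0) :
    p * log (p / q) - p * log (p / r) = p * log (r / q) := by
  rcases eq_or_ne p 0 with rfl | hp
  · simp
  rw [log_div hp hq, log_div hp hr, log_div hr hq]
  ring

theorem Finset.sum_mul_sub_le_sum_mul_log_div_sub {ι : Type*} (s : Finset ι) {w p : ι → ℝ}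
    {q : ℝ} (hw : ∀ i ∈ s, 0 ≤ w i) (hp : ∀ i ∈ s, 0 ≤ p i) (hq : 0 ≤ q)
    (hpos : 0 < ∑ i ∈ s, w i * p i → 0 < q) :
    ∑ i ∈ s, w i * p i - q ≤
      ∑ i ∈ s, w i * (p i * log (p i / q) - p i * log (p i / ∑ j ∈ s, w j * p j)) := by
  set S := ∑ j ∈ s, w j * p j
  have hwp : ∀ i ∈ s, 0 ≤ w i * p i := fun i hi => mul_nonneg (hw i hi) (hp i hi)
  have hS : 0 ≤ S := sum_nonneg hwp
  have hcollapse :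
      ∑ i ∈ s, w i * (p i * log (p i / q) - p i * log (p i / S)) = S * log (S / q) := by
    rcases hS.eq_or_lt with hS0 | hSpos
    · have hzero := (sum_eq_zero_iff_of_nonneg hwp).1 hS0.symm
      rw [← hS0, zero_mul]
      refine sum_eq_zero fun i hi => ?_
      rw [mul_sub, ← mul_assoc, ← mul_assoc, hzero i hi]
      ring
    · rw [sum_mul]
      refine sum_congr rfl fun i _ => ?_
      rw [Real.mul_log_div_sub_mul_log_div _ (hpos hSpos).ne' hSpos.ne']
      ring
  rw [hcollapse]
  exact Real.sub_le_mul_log_div hS hq hpos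

theorem aa_fusion_best_fit_kl_general (d : ℕ) (I : Type*) [Fintype I]
    (D : I → (Fin d → ℝ) → ℝ)
    (hDnn : ∀ i x, 0 ≤ D i x) (hDint : ∀ i, Integrable (D i))
    (w : I → ℝ) (hw : ∀ i, 0 < w i)
    (g : (Fin d → ℝ) → ℝ) (hgnn : ∀ x, 0 ≤ g x)
    (hgint : Integrable g)
    (hgpos : ∀ᵐ x : Fin d → ℝ ∂volume, 0 < (∑ j, w j * D j x) → 0 < g x)
    (hmass : ∫ x : Fin d → ℝ, g x = ∫ x : Fin d → ℝ, ∑ j, w j * D j x)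
    (hint1 : ∀ i, Integrable (fun x : Fin d → ℝ => D i x * Real.log (D i x / g x)))
    (hint2 : ∀ i, Integrable
      (fun x : Fin d → ℝ => D i x * Real.log (D i x / ∑ j, w j * D j x))) :
    ∑ i, w i * ∫ x : Fin d → ℝ, D i x * Real.log (D i x / g x)
      ≥ ∑ i, w i * ∫ x : Fin d → ℝ, D i x * Real.log (D i x / ∑ j, w j * D j x) := by
  have hSint : Integrable fun x => ∑ j, w j * D j x :=
    integrable_finsetSum _ fun j _ => (hDint j).const_mul _
  have hterm : ∀ i ∈ univ, Integrable fun x => w i *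
      (D i x * log (D i x / g x) - D i x * log (D i x / ∑ j, w j * D j x)) :=
    fun i _ => ((hint1 i).sub (hint2 i)).const_mul _
  have hpointwise : ∀ᵐ x, (∑ j, w j * D j x) - g x ≤ ∑ i, w i *
      (D i x * log (D i x / g x) - D i x * log (D i x / ∑ j, w j * D j x)) := by
    filter_upwards [hgpos] with x hx
    exact univ.sum_mul_sub_le_sum_mul_log_div_sub (fun i _ => (hw i).le) (fun i _ => hDnn i x)
      (hgnn x) hx
  have hintegral := integral_mono_ae (f := fun x => (∑ j, w j * D j x) - g x)
    (hSint.sub hgint) (integrable_finsetSum _ hterm) hpointwise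
  rw [integral_sub hSint hgint, hmass, sub_self, integral_finsetSum _ hterm] at hintegral
  have hterm_integral : ∀ i, ∫ x, w i *
      (D i x * log (D i x / g x) - D i x * log (D i x / ∑ j, w j * D j x)) =
      (w i * ∫ x, D i x * log (D i x / g x)) -
        w i * ∫ x, D i x * log (D i x / ∑ j, w j * D j x) := fun i => by
    rw [integral_const_mul, integral_sub (hint1 i) (hint2 i), mul_sub]
  rw [sum_congr rfl fun i _ => hterm_integral i, sum_sub_distrib] at hintegral
  exact sub_nonneg.1 hintegral

/-- (AA fusion is the best fit of the mixture in the KL sense) For nonnegative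
integrable `D₁, …, D_I`, positive weights summing to one, `D_AA = Σᵢ wᵢ Dᵢ`, and
nonnegative measurable `g` positive a.e. on `{D_AA > 0}` with the same total mass
as `D_AA`, assuming the relevant integrals exist:
`Σᵢ wᵢ D_KL(Dᵢ‖g) ≥ Σᵢ wᵢ D_KL(Dᵢ‖D_AA)`. -/
theorem aa_fusion_best_fit_kl (d : ℕ) (I : Type*) [Fintype I]
    (D : I → (Fin d → ℝ) → ℝ) (hDmeas : ∀ i, Measurable (D i))
    (hDnn : ∀ i x, 0 ≤ D i x) (hDint : ∀ i, Integrable (D i))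
    (w : I → ℝ) (hw : ∀ i, 0 < w i) (hw1 : ∑ i, w i = 1)
    (g : (Fin d → ℝ) → ℝ) (hgmeas : Measurable g) (hgnn : ∀ x, 0 ≤ g x)
    (hgint : Integrable g)
    (hgpos : ∀ᵐ x : Fin d → ℝ ∂volume, 0 < (∑ j, w j * D j x) → 0 < g x)
    (hmass : ∫ x : Fin d → ℝ, g x = ∫ x : Fin d → ℝ, ∑ j, w j * D j x)
    (hint1 : ∀ i, Integrable (fun x : Fin d → ℝ => D i x * Real.log (D i x / g x)))
    (hint2 : ∀ i, Integrable
      (fun x : Fin d → ℝ => D i x * Real.log (D i x / ∑ j, w j * D j x))) :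
    ∑ i, w i * ∫ x : Fin d → ℝ, D i x * Real.log (D i x / g x)
      ≥ ∑ i, w i * ∫ x : Fin d → ℝ, D i x * Real.log (D i x / ∑ j, w j * D j x) :=
  aa_fusion_best_fit_kl_general d I D hDnn hDint w hw g hgnn hgint hgpos hmass hint1 hint2
end
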